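/- Let F = ⟨A, R, W, S⟩ be a semiring-based weighted argumentation framework over an absorptive c-semiring S, let Z ⊆ A be w-conflict-free, and fix z ∈ Z. Define the reduced WAF F' on A' = {z} ∪ (A \ Z) by W'(z, j) = ⊗_{i ∈ Z} W(i, j) and W'(j, z) = ⊗_{i ∈ Z} W(j, i) for j ∈ A \ Z, W'(j, j') = W(j, j') for j, j' ∈ A \ Z, and W'(z, z) = ⊤. Then Z is a w-complete extension of F if and only if {z} is a w-complete extension of F'. -/

import Mathlib

/-! In an absorptive semiring `1` (= `⊤`) is the only unit, since `u = u + u * u⁻¹ = u + 1 = 1`;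
so a product of weights is `⊤` iff every factor is. Hence `B` is w-admissible iff it is
conflict-free and `W(B, a) ≤ₛ W(a, B)` for every `a ∉ B` with `W(a, B) ≠ ⊤`. For `X` disjoint
from `Z`, the set `X ∪ Z` of `F` and the set `{z} ∪ X` of `F'` have the same weights towards and
from every argument outside `Z`, and (as `W(Z, Z) = ⊤`) the same self-weight. So `X ∪ Z` is
w-admissible in `F` iff `{z} ∪ X` is in `F'`; the cases `X = ∅` and `X = {b}` give the theorem. -/

open Finset

variable {A : Type*} [Fintype A] [DecidableEq A] {S : Type*} [CommSemiring S]

/-- The order induced by the idempotent addition of a c-semiring: `a ≤ₛ b` iff `a + b = b`. -/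
def sLE (a b : S) : Prop := a + b = b

/-- The attack weight `W(B, D)` from a set of arguments `B` to a set `D`:
the semiring product of all pairwise weights. -/
def Wsets (W : A → A → S) (B D : Finset A) : S := ∏ b ∈ B, ∏ d ∈ D, W b d

/-- `B` is w-conflict-free iff `W(B, B) = ⊤` (here `⊤` is the multiplicative unit `1`). -/
def wConflictFree (W : A → A → S) (B : Finset A) : Prop := Wsets W B B = 1

/-- Within the framework whose set of arguments is `U`, the set `B` w-defends `b`:
for every attacker `a ∈ U` of `b` (i.e. `W a b ≠ ⊤`), `W(a, B ∪ {b}) ≥ₛ W(B, a)`. -/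
def wDefendsIn (W : A → A → S) (U B : Finset A) (b : A) : Prop :=
  ∀ a ∈ U, W a b ≠ 1 → sLE (Wsets W B {a}) (Wsets W {a} (insert b B))

/-- `B` is w-admissible in the framework with argument set `U`:
`B ⊆ U`, `B` is w-conflict-free, and `B` w-defends each of its members. -/
def wAdmissibleIn (W : A → A → S) (U B : Finset A) : Prop :=
  B ⊆ U ∧ wConflictFree W B ∧ ∀ b ∈ B, wDefendsIn W U B b

/-- `B` is a w-stable extension: w-admissible and every argument of `U` outside `B`
is attacked by some member of `B`. -/
def wStableIn (W : A → A → S) (U B : Finset A) : Prop :=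
  wAdmissibleIn W U B ∧ ∀ a ∈ U, a ∉ B → ∃ b ∈ B, W b a ≠ 1

/-- `B` is a w-complete extension: w-admissible and it contains every argument `b`
such that `B ∪ {b}` is w-admissible. -/
def wCompleteIn (W : A → A → S) (U B : Finset A) : Prop :=
  wAdmissibleIn W U B ∧ ∀ b ∈ U, wAdmissibleIn W U (insert b B) → b ∈ B

/-- `B` is a w-preferred extension: a ⊆-maximal w-admissible subset. -/
def wPreferredIn (W : A → A → S) (U B : Finset A) : Prop :=
  wAdmissibleIn W U B ∧ ∀ C : Finset A, wAdmissibleIn W U C → B ⊆ C → C = B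


theorem subsingleton_units_of_absorptive {R : Type*} [CommSemiring R]
    (habs : ∀ s t : R, s + s * t = s) : Subsingleton Rˣ := by
  refine subsingleton_of_forall_eq 1 fun u => Units.ext ?_
  calc (u : R) = u + u * ↑u⁻¹ := (habs _ _).symm
    _ = 1 + 1 * u := by rw [Units.mul_inv, one_mul, add_comm]
    _ = 1 := habs _ _

section Weights

variable {α R : Type*} [CommSemiring R] {W : α → α → R}

theorem Wsets_singleton_left (a : α) (D : Finset α) : Wsets W {a} D = ∏ d ∈ D, W a d :=
  prod_singleton _ _

theorem Wsets_singleton_right (D : Finset α) (a : α) : Wsets W D {a} = ∏ d ∈ D, W d a :=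
  prod_congr rfl fun _ _ => prod_singleton _ _

theorem Wsets_union_left [DecidableEq α] {B C : Finset α} (h : Disjoint B C) (D : Finset α) :
    Wsets W (B ∪ C) D = Wsets W B D * Wsets W C D :=
  prod_union h

theorem Wsets_union_right [DecidableEq α] (B : Finset α) {C D : Finset α} (h : Disjoint C D) :
    Wsets W B (C ∪ D) = Wsets W B C * Wsets W B D := by
  simp only [Wsets, prod_union h, prod_mul_distrib]

theorem wConflictFree_iff [Subsingleton Rˣ] {B : Finset α} :
    wConflictFree W B ↔ ∀ a ∈ B, ∀ b ∈ B, W a b = 1 := by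
  simp only [wConflictFree, Wsets, prod_eq_one_iff]

theorem wAdmissibleIn_iff [DecidableEq α] [Subsingleton Rˣ] {U B : Finset α} :
    wAdmissibleIn W U B ↔ B ⊆ U ∧ wConflictFree W B ∧
      ∀ a ∈ U \ B, Wsets W {a} B ≠ 1 → sLE (Wsets W B {a}) (Wsets W {a} B) := by
  refine and_congr_right fun _ => and_congr_right fun hcf => ?_
  simp only [wDefendsIn, Wsets_singleton_left, Ne, prod_eq_one_iff, not_forall, mem_sdiff]
  constructor
  · rintro hdef a ⟨ha, -⟩ ⟨b, hb, hab⟩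
    simpa only [insert_eq_of_mem hb] using hdef b hb a ha hab
  · intro hdef b hb a ha hab
    have haB : a ∉ B := fun haB => hab (wConflictFree_iff.mp hcf a haB b hb)
    rw [insert_eq_of_mem hb]
    exact hdef a ⟨ha, haB⟩ ⟨b, hb, hab⟩

end Weights

structure IsContraction {α R : Type*} [CommSemiring R] (W W' : α → α → R) (Z : Finset α) (z : α) :
    Prop where
  apply_left : ∀ j ∉ Z, W' z j = ∏ i ∈ Z, W i j
  apply_right : ∀ j ∉ Z, W' j z = ∏ i ∈ Z, W j i
  apply_of_notMem : ∀ j ∉ Z, ∀ j' ∉ Z, W' j j' = W j j'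
  apply_self : W' z z = 1

namespace IsContraction

variable {α R : Type*} [CommSemiring R] {W W' : α → α → R} {Z X D : Finset α} {z : α}

theorem Wsets_singleton_left (h : IsContraction W W' Z z) (hD : Disjoint D Z) :
    Wsets W' {z} D = Wsets W Z D := by
  rw [_root_.Wsets_singleton_left, Wsets, prod_comm]
  exact prod_congr rfl fun d hd => h.apply_left d (disjoint_left.mp hD hd)

theorem Wsets_singleton_right (h : IsContraction W W' Z z) (hD : Disjoint D Z) :
    Wsets W' D {z} = Wsets W D Z := by
  rw [_root_.Wsets_singleton_right]
  exact prod_congr rfl fun d hd => h.apply_right d (disjoint_left.mp hD hd)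

theorem Wsets_eq (h : IsContraction W W' Z z) (hX : Disjoint X Z) (hD : Disjoint D Z) :
    Wsets W' X D = Wsets W X D :=
  prod_congr rfl fun x hx => prod_congr rfl fun d hd =>
    h.apply_of_notMem x (disjoint_left.mp hX hx) d (disjoint_left.mp hD hd)

variable [DecidableEq α]

theorem Wsets_insert_left (h : IsContraction W W' Z z) (hz : z ∈ Z) (hX : Disjoint X Z)
    (hD : Disjoint D Z) : Wsets W' (insert z X) D = Wsets W (X ∪ Z) D := by
  have hzX : Disjoint {z} X := disjoint_singleton_left.mpr (disjoint_right.mp hX hz)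
  rw [insert_eq, Wsets_union_left hzX, Wsets_union_left hX, h.Wsets_singleton_left hD,
    h.Wsets_eq hX hD, mul_comm]

theorem Wsets_insert_right (h : IsContraction W W' Z z) (hz : z ∈ Z) (hX : Disjoint X Z)
    (hD : Disjoint D Z) : Wsets W' D (insert z X) = Wsets W D (X ∪ Z) := by
  have hzX : Disjoint {z} X := disjoint_singleton_left.mpr (disjoint_right.mp hX hz)
  rw [insert_eq, Wsets_union_right _ hzX, Wsets_union_right _ hX, h.Wsets_singleton_right hD,
    h.Wsets_eq hD hX, mul_comm]

theorem Wsets_insert_self (h : IsContraction W W' Z z) (hz : z ∈ Z) (hcf : wConflictFree W Z)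
    (hX : Disjoint X Z) : Wsets W' (insert z X) (insert z X) = Wsets W (X ∪ Z) (X ∪ Z) := by
  have hzX : Disjoint {z} X := disjoint_singleton_left.mpr (disjoint_right.mp hX hz)
  have hzz : Wsets W' {z} {z} = 1 := by rw [_root_.Wsets_singleton_left, prod_singleton,
    h.apply_self]
  rw [insert_eq, Wsets_union_left hzX, Wsets_union_right _ hzX, Wsets_union_right _ hzX,
    Wsets_union_left hX, Wsets_union_right _ hX, Wsets_union_right _ hX, hzz,
    h.Wsets_singleton_left hX, h.Wsets_singleton_right hX, h.Wsets_eq hX hX, show Wsets W Z Z = 1 from hcf]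
  ring

theorem wAdmissibleIn_insert_iff [Fintype α] [Subsingleton Rˣ] (h : IsContraction W W' Z z)
    (hz : z ∈ Z) (hcf : wConflictFree W Z) (hX : Disjoint X Z) :
    wAdmissibleIn W' (insert z (univ \ Z)) (insert z X) ↔ wAdmissibleIn W univ (X ∪ Z) := by
  have houtside : insert z (univ \ Z) \ insert z X = univ \ (X ∪ Z) := by
    ext a
    by_cases haz : a = z <;> simp [haz, hz, and_comm]
  rw [wAdmissibleIn_iff, wAdmissibleIn_iff, houtside, wConflictFree, wConflictFree,
    h.Wsets_insert_self hz hcf hX]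
  refine and_congr ⟨fun _ => subset_univ _, fun _ => ?_⟩ (and_congr_right fun _ => ?_)
  · exact insert_subset_insert _ (subset_sdiff.mpr ⟨subset_univ _, hX⟩)
  refine forall₂_congr fun a ha => ?_
  have haZ : Disjoint {a} Z := disjoint_singleton_left.mpr (by simp_all)
  rw [h.Wsets_insert_left hz hX haZ, h.Wsets_insert_right hz hX haZ]

theorem wCompleteIn_singleton_iff [Fintype α] [Subsingleton Rˣ] (h : IsContraction W W' Z z)
    (hz : z ∈ Z) (hcf : wConflictFree W Z) :
    wCompleteIn W' (insert z (univ \ Z)) {z} ↔ wCompleteIn W univ Z := by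
  have hZ : wAdmissibleIn W' (insert z (univ \ Z)) {z} ↔ wAdmissibleIn W univ Z := by
    simpa using h.wAdmissibleIn_insert_iff hz hcf (disjoint_empty_left Z)
  have hinsert (b : α) (hb : b ∉ Z) : wAdmissibleIn W' (insert z (univ \ Z)) (insert b {z}) ↔
      wAdmissibleIn W univ (insert b Z) := by
    rw [pair_comm, h.wAdmissibleIn_insert_iff hz hcf (disjoint_singleton_left.mpr hb), insert_eq]
  refine and_congr hZ ⟨fun hmax b _ hb => ?_, fun hmax b hb hb' => ?_⟩
  · by_contra hbZ
    have hbz := mem_singleton.mp <| hmax b (mem_insert_of_mem (by simpa using hbZ))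
      ((hinsert b hbZ).mpr hb)
    exact hbZ (hbz ▸ hz)
  · rcases mem_insert.mp hb with rfl | hb
    · exact mem_singleton_self b
    · have hbZ := (mem_sdiff.mp hb).2
      exact absurd (hmax b (mem_univ b) ((hinsert b hbZ).mp hb')) hbZ

end IsContraction

theorem contraction_preserves_complete_general (W : A → A → S)
    (habs : ∀ s t : S, s + s * t = s)
    (Z : Finset A) (hcf : wConflictFree W Z) (z : A) (hz : z ∈ Z)
    (W' : A → A → S)
    (hW'zj : ∀ j ∉ Z, W' z j = ∏ i ∈ Z, W i j)
    (hW'jz : ∀ j ∉ Z, W' j z = ∏ i ∈ Z, W j i)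
    (hW'jj : ∀ j ∉ Z, ∀ j' ∉ Z, W' j j' = W j j')
    (hW'zz : W' z z = 1) :
    wCompleteIn W Finset.univ Z ↔
      wCompleteIn W' (insert z (Finset.univ \ Z)) {z} := by
  have := subsingleton_units_of_absorptive habs
  exact (IsContraction.wCompleteIn_singleton_iff ⟨hW'zj, hW'jz, hW'jj, hW'zz⟩ hz hcf).symm

/-- Matrix reduction by contraction of a w-conflict-free set Z into a single
argument z ∈ Z: Z is a w-complete extension in F iff {z} is a w-complete extension in the reduced framework F',
whose argument set is {z} ∪ (A \ Z) and whose weights W' are obtained by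
combining the rows and columns of Z. -/
theorem contraction_preserves_complete (W : A → A → S)
    (hadd : ∀ s : S, s + s = s) (habs : ∀ s t : S, s + s * t = s)
    (Z : Finset A) (hcf : wConflictFree W Z) (z : A) (hz : z ∈ Z)
    (W' : A → A → S)
    (hW'zj : ∀ j ∉ Z, W' z j = ∏ i ∈ Z, W i j)
    (hW'jz : ∀ j ∉ Z, W' j z = ∏ i ∈ Z, W j i)
    (hW'jj : ∀ j ∉ Z, ∀ j' ∉ Z, W' j j' = W j j')
    (hW'zz : W' z z = 1) :
    wCompleteIn W Finset.univ Z ↔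
      wCompleteIn W' (insert z (Finset.univ \ Z)) {z} :=
  contraction_preserves_complete_general W habs Z hcf z hz W' hW'zj hW'jz hW'jj hW'zz
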